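/- Let T₁, …, T_N be n×n complex matrices and let T = [T₁ T₂ ⋯ T_N] be the n×(Nn) row block matrix. Then the operator norm of T is at most 1 if and only if there exist n×n contractions Γ₁, …, Γ_N such that T₁ = Γ₁ and, for each k with 2 ≤ k ≤ N, T_k = D_{Γ₁ᴴ} · D_{Γ₂ᴴ} ⋯ D_{Γ_{k−1}ᴴ} · Γ_k, where the product of defect operators is taken in the indicated order and D_{Γⱼᴴ} = (I − ΓⱼΓⱼᴴ)^{1/2}. -/

import Mathlib

/-!
A row `[T₁ ⋯ T_N]` is a contraction iff `∑ Tₖ Tₖᴴ ≤ 1`. If so, `T₁ T₁ᴴ ≤ 1` and the remaining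
row satisfies `[T₂ ⋯ T_N] [T₂ ⋯ T_N]ᴴ ≤ D²` with `D = D_{T₁ᴴ}`, so by Douglas' factorization
lemma `[T₂ ⋯ T_N] = D S` for a row contraction `S`; induction on `N` applied to `S` produces the
`Γₖ`. Conversely `∑ Tₖ Tₖᴴ = Γ₁ Γ₁ᴴ + D (∑ Sₖ Sₖᴴ) D ≤ Γ₁ Γ₁ᴴ + D² = 1`.
-/

open scoped Matrix Matrix.Norms.L2Operator ComplexOrder

/-- The unique positive semidefinite square root of a matrix, extended by `0` to matrices that
are not positive semidefinite. -/
noncomputable def psdSqrt {m : ℕ} (A : Matrix (Fin m) (Fin m) ℂ) : Matrix (Fin m) (Fin m) ℂ :=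
  letI := Classical.dec A.PosSemidef
  if h : A.PosSemidef then
    h.1.eigenvectorUnitary.1 * Matrix.diagonal ((↑) ∘ Real.sqrt ∘ h.1.eigenvalues) *
      (star h.1.eigenvectorUnitary : Matrix (Fin m) (Fin m) ℂ) else 0

open scoped MatrixOrder

theorem psdSqrt_eq_sqrt {m : ℕ} {A : Matrix (Fin m) (Fin m) ℂ} (hA : 0 ≤ A) :
    psdSqrt A = CFC.sqrt A := by
  have hA' := Matrix.nonneg_iff_posSemidef.mp hA
  rw [psdSqrt, dif_pos hA', CFC.sqrt_eq_real_sqrt A hA, cfcₙ_eq_cfc, hA'.1.cfc_eq]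
  rfl

namespace Matrix

variable {ι n m α : Type*}

theorem norm_le_one_iff_mul_conjTranspose_le_one [Fintype n] [DecidableEq n] [Fintype m]
    [DecidableEq m] (A : Matrix n m ℂ) : ‖A‖ ≤ 1 ↔ A * Aᴴ ≤ 1 := by
  have h : ‖A * Aᴴ‖ = ‖A‖ ^ 2 := by
    simpa [sq, l2_opNorm_conjTranspose] using l2_opNorm_conjTranspose_mul_self Aᴴ
  rw [← CStarAlgebra.norm_le_one_iff_of_nonneg _ (posSemidef_self_mul_conjTranspose A).nonneg, h,
    sq_le_one_iff₀ (norm_nonneg A)]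

/-- The row block matrix `[T₁ T₂ ⋯]`. -/
def blockRow (T : ι → Matrix n m α) : Matrix n (ι × m) α :=
  of fun i p => T p.1 i p.2

theorem blockRow_mul_conjTranspose [Fintype ι] [Fintype m] [NonUnitalNonAssocSemiring α]
    [Star α] (T : ι → Matrix n m α) : blockRow T * (blockRow T)ᴴ = ∑ k, T k * (T k)ᴴ := by
  ext i j
  simp [blockRow, mul_apply, sum_apply, Fintype.sum_prod_type]

theorem exists_eq_mul_of_mul_conjTranspose_le [Fintype n] [DecidableEq n] [Fintype m]
    {P : Matrix n n ℂ} (hP : IsSelfAdjoint P) {R : Matrix n m ℂ}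
    (hR : R * Rᴴ ≤ P * P) : ∃ S : Matrix n m ℂ, S * Sᴴ ≤ 1 ∧ R = P * S := by
  have hcont (f : ℝ → ℝ) : ContinuousOn f (spectrum ℝ P) := P.finite_real_spectrum.continuousOn f
  have cfc_mul_cfc (f g : ℝ → ℝ) : cfc f P * cfc g P = cfc (fun x => f x * g x) P :=
    (cfc_mul f g P (hcont f) (hcont g)).symm
  -- `P'` is the Moore–Penrose inverse of `P` and `Q` the orthogonal projection onto its range;
  -- `R Rᴴ ≤ P²` forces the range of `R` into that of `P`, and then `R = P (P' R)`.
  set P' := cfc (·⁻¹ : ℝ → ℝ) P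
  set Q := cfc (fun x : ℝ => x * x⁻¹) P
  have hPP' : P * P' = Q := by
    conv_lhs => rw [← cfc_id' ℝ P]
    rw [cfc_mul_cfc]
  have hP'P : P' * P = Q := by
    conv_lhs => rw [← cfc_id' ℝ P]
    rw [cfc_mul_cfc]
    exact cfc_congr fun x _ => mul_comm _ _
  have hQP : Q * P = P := by
    conv_lhs => rw [← cfc_id' ℝ P]
    rw [cfc_mul_cfc]
    exact (cfc_congr fun x _ => mul_inv_mul_cancel x).trans (cfc_id' ℝ P)
  have hQ : IsSelfAdjoint Q := cfc_predicate _ _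
  have hQ_le : Q ≤ 1 := cfc_le_one _ _ fun x _ => by
    rcases eq_or_ne x 0 with rfl | hx <;> simp [*]
  have hQR : (1 - Q) * R = 0 := by
    have hle : (1 - Q) * R * ((1 - Q) * R)ᴴ ≤ 0 := calc
      _ = (1 - Q) * (R * Rᴴ) * (1 - Q) := by
        rw [conjTranspose_mul, ← star_eq_conjTranspose, star_sub, star_one, hQ.star_eq,
          Matrix.mul_assoc, Matrix.mul_assoc, Matrix.mul_assoc]
      _ ≤ (1 - Q) * (P * P) * (1 - Q) := ((IsSelfAdjoint.one _).sub hQ).conjugate_le_conjugate hR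
      _ = 0 := by rw [sub_mul, one_mul, ← mul_assoc, hQP, sub_self, zero_mul]
    exact self_mul_conjTranspose_eq_zero.mp
      (le_antisymm hle (posSemidef_self_mul_conjTranspose _).nonneg)
  refine ⟨P' * R, ?_, ?_⟩
  · have hP' : IsSelfAdjoint P' := cfc_predicate _ _
    calc P' * R * (P' * R)ᴴ = P' * (R * Rᴴ) * P' := by
          rw [conjTranspose_mul, ← star_eq_conjTranspose P', hP'.star_eq, Matrix.mul_assoc,
            Matrix.mul_assoc, Matrix.mul_assoc]
      _ ≤ P' * (P * P) * P' := hP'.conjugate_le_conjugate hR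
      _ = Q := by rw [← mul_assoc, hP'P, hQP, hPP']
      _ ≤ 1 := hQ_le
  · rw [Matrix.sub_mul, Matrix.one_mul, sub_eq_zero] at hQR
    rw [← Matrix.mul_assoc, hPP', ← hQR]

theorem exists_eq_mul_of_sum_mul_conjTranspose_le [Fintype ι] [Fintype n] [DecidableEq n]
    [Fintype m] {P : Matrix n n ℂ} (hP : IsSelfAdjoint P) {R : ι → Matrix n m ℂ}
    (hR : ∑ k, R k * (R k)ᴴ ≤ P * P) :
    ∃ S : ι → Matrix n m ℂ, ∑ k, S k * (S k)ᴴ ≤ 1 ∧ ∀ k, R k = P * S k := by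
  rw [← blockRow_mul_conjTranspose] at hR
  obtain ⟨S, hS, hRS⟩ := exists_eq_mul_of_mul_conjTranspose_le hP hR
  refine ⟨fun k => of fun i j => S i (k, j), ?_, fun k => ?_⟩
  · rwa [← blockRow_mul_conjTranspose]
  · ext i j
    exact congrFun (congrFun hRS i) (k, j)

end Matrix

/-- `D_{Γ₁ᴴ} D_{Γ₂ᴴ} ⋯ D_{Γₖᴴ}`, the product of the first `k` adjoint defect operators. -/
noncomputable def adjDefectProd {n N : ℕ} (Γ : Fin N → Matrix (Fin n) (Fin n) ℂ) (k : ℕ) :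
    Matrix (Fin n) (Fin n) ℂ :=
  (((List.finRange N).take k).map fun j => psdSqrt (1 - Γ j * (Γ j)ᴴ)).prod

@[simp]
theorem adjDefectProd_zero {n N : ℕ} (Γ : Fin N → Matrix (Fin n) (Fin n) ℂ) :
    adjDefectProd Γ 0 = 1 := by
  simp [adjDefectProd]

theorem adjDefectProd_succ {n N : ℕ} (Γ : Fin (N + 1) → Matrix (Fin n) (Fin n) ℂ) (k : ℕ) :
    adjDefectProd Γ (k + 1) = psdSqrt (1 - Γ 0 * (Γ 0)ᴴ) * adjDefectProd (Fin.tail Γ) k := by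
  rw [adjDefectProd, List.finRange_succ, List.take_succ_cons, List.map_cons, List.prod_cons,
    ← List.map_take, List.map_map]
  rfl

theorem exists_contractions_of_sum_mul_conjTranspose_le_one {n : ℕ} :
    ∀ {N : ℕ} (T : Fin N → Matrix (Fin n) (Fin n) ℂ), ∑ k, T k * (T k)ᴴ ≤ 1 →
      ∃ Γ : Fin N → Matrix (Fin n) (Fin n) ℂ,
        (∀ k, Γ k * (Γ k)ᴴ ≤ 1) ∧ ∀ k, T k = adjDefectProd Γ k * Γ k
  | 0, _, _ => ⟨finZeroElim, finZeroElim, finZeroElim⟩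
  | N + 1, T, hT => by
    rw [Fin.sum_univ_succ] at hT
    have hT₀ : T 0 * (T 0)ᴴ ≤ 1 := le_trans
      (le_add_of_nonneg_right (Finset.sum_nonneg fun k _ =>
        (Matrix.posSemidef_self_mul_conjTranspose _).nonneg)) hT
    have hD : 0 ≤ 1 - T 0 * (T 0)ᴴ := sub_nonneg.mpr hT₀
    obtain ⟨S, hS, hTS⟩ := Matrix.exists_eq_mul_of_sum_mul_conjTranspose_le
      (CFC.sqrt_nonneg (1 - T 0 * (T 0)ᴴ)).isSelfAdjoint (R := Fin.tail T)
      (by rwa [CFC.sqrt_mul_sqrt_self _ hD, le_sub_iff_add_le'])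
    obtain ⟨Γ, hΓ, hSΓ⟩ := exists_contractions_of_sum_mul_conjTranspose_le_one S hS
    refine ⟨Fin.cons (T 0) Γ, Fin.cases hT₀ hΓ, Fin.cases (by simp) fun k => ?_⟩
    rw [Fin.val_succ, adjDefectProd_succ, Fin.cons_zero, Fin.tail_cons, Fin.cons_succ,
      psdSqrt_eq_sqrt hD, Matrix.mul_assoc, ← hSΓ]
    exact hTS k

theorem sum_adjDefectProd_mul_conjTranspose_le_one {n : ℕ} :
    ∀ {N : ℕ} (Γ : Fin N → Matrix (Fin n) (Fin n) ℂ), (∀ k, Γ k * (Γ k)ᴴ ≤ 1) →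
      ∑ k : Fin N, adjDefectProd Γ k * Γ k * (adjDefectProd Γ k * Γ k)ᴴ ≤ 1
  | 0, _, _ => by simp
  | N + 1, Γ, hΓ => by
    have hD : 0 ≤ 1 - Γ 0 * (Γ 0)ᴴ := sub_nonneg.mpr (hΓ 0)
    set D := CFC.sqrt (1 - Γ 0 * (Γ 0)ᴴ)
    have hDsa : IsSelfAdjoint D := (CFC.sqrt_nonneg _).isSelfAdjoint
    have hDH : Dᴴ = D := hDsa
    set S : Fin N → Matrix (Fin n) (Fin n) ℂ := fun k => adjDefectProd (Fin.tail Γ) k * Γ k.succ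
    have hS : ∑ k, S k * (S k)ᴴ ≤ 1 :=
      sum_adjDefectProd_mul_conjTranspose_le_one (Fin.tail Γ) fun k => hΓ k.succ
    have hDS (k : Fin N) : adjDefectProd Γ k.succ * Γ k.succ = D * S k := by
      rw [Fin.val_succ, adjDefectProd_succ, psdSqrt_eq_sqrt hD, Matrix.mul_assoc]
    calc ∑ k : Fin (N + 1), adjDefectProd Γ k * Γ k * (adjDefectProd Γ k * Γ k)ᴴ
        = Γ 0 * (Γ 0)ᴴ + D * (∑ k, S k * (S k)ᴴ) * D := by
          rw [Fin.sum_univ_succ]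
          simp only [hDS]
          simp only [Fin.val_zero, adjDefectProd_zero, Matrix.one_mul,
            Matrix.conjTranspose_mul, hDH, Finset.mul_sum, Finset.sum_mul, Matrix.mul_assoc]
      _ ≤ Γ 0 * (Γ 0)ᴴ + D * 1 * D :=
        (add_le_add_iff_left _).mpr (hDsa.conjugate_le_conjugate hS)
      _ = 1 := by rw [Matrix.mul_one, CFC.sqrt_mul_sqrt_self _ hD, add_sub_cancel]

/-- **Structure of a general row contraction.** The row block matrix `T = [T₁ T₂ ⋯ T_N]`
(realized as a matrix indexed by `Fin n × (Fin N × Fin n)`, with `(i, (k, j))` entry the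
`(i, j)` entry of the `k`-th block) has operator norm at most 1 if and only if there exist
contractions `Γ₁, …, Γ_N` such that `T₁ = Γ₁` and, for `k ≥ 2`,
`T_k = D_{Γ₁ᴴ}·D_{Γ₂ᴴ} ⋯ D_{Γ_{k−1}ᴴ}·Γ_k`, where `D_{Γⱼᴴ} = (I − ΓⱼΓⱼᴴ)^{1/2}` and the
product is taken in the indicated order. -/
theorem rowContraction_iff_exists_contractions_general
    {n N : ℕ} (hN : 0 < N) (T : Fin N → Matrix (Fin n) (Fin n) ℂ) :
    ‖(Matrix.of fun i (p : Fin N × Fin n) => T p.1 i p.2 :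
        Matrix (Fin n) (Fin N × Fin n) ℂ)‖ ≤ 1 ↔
      ∃ Γ : Fin N → Matrix (Fin n) (Fin n) ℂ,
        (∀ k, ‖Γ k‖ ≤ 1) ∧
        T ⟨0, hN⟩ = Γ ⟨0, hN⟩ ∧
        ∀ k : Fin N, 1 ≤ (k : ℕ) →
          T k = (((List.finRange N).take (k : ℕ)).map
                    fun j => psdSqrt (1 - Γ j * (Γ j)ᴴ)).prod * Γ k := by
  rw [show (Matrix.of fun i (p : Fin N × Fin n) => T p.1 i p.2) = Matrix.blockRow T from rfl]
  simp only [Matrix.norm_le_one_iff_mul_conjTranspose_le_one, Matrix.blockRow_mul_conjTranspose]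
  constructor
  · intro hT
    obtain ⟨Γ, hΓ, hTΓ⟩ := exists_contractions_of_sum_mul_conjTranspose_le_one T hT
    exact ⟨Γ, hΓ, by simpa using hTΓ ⟨0, hN⟩, fun k _ => hTΓ k⟩
  · rintro ⟨Γ, hΓ, h₀, h⟩
    obtain rfl : T = fun k : Fin N => adjDefectProd Γ k * Γ k := funext fun k => by
      rcases Nat.eq_zero_or_pos k with hk | hk
      · obtain rfl : k = ⟨0, hN⟩ := Fin.ext hk
        simpa using h₀
      · exact h k hk
    exact sum_adjDefectProd_mul_conjTranspose_le_one Γ hΓ
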